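/- arXiv:1704.01393 — 6 statements merged into one kernel-verified Lean document; each statement's English description precedes it below -/
import Mathlib

section
/- In the centerless quantum Schrödinger algebra, with Ẽ := X + (q⁻¹-q)YE, one has ẼX = XẼ, ẼY = q⁻¹YẼ, and ẼK = q⁻¹KẼ. -/
/-- A representation of the centerless quantum Schrödinger algebra: elements of a
`ℂ`-algebra `A` satisfying the defining relations of `S̄_q = S_q / C S_q`. -/
structure SqbRep (A : Type*) [Ring A] [Algebra ℂ A] (q : ℂ) where
  E : A
  F : A
  K : A
  K' : A
  X : A
  Y : A
  hKK' : K * K' = 1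
  hK'K : K' * K = 1
  hKE : K * E = (q ^ 2) • (E * K)
  hKF : K * F = ((q ^ 2)⁻¹) • (F * K)
  hEF : E * F - F * E = (q - q⁻¹)⁻¹ • (K - K')
  hKX : K * X = q • (X * K)
  hKY : K * Y = q⁻¹ • (Y * K)
  hYX : q • (Y * X) = X * Y
  hEX : E * X = q • (X * E)
  hEY : E * Y = X + q⁻¹ • (Y * E)
  hFX : F * X = Y * K' + X * F
  hFY : F * Y = Y * F

theorem stmt1 {A : Type*} [Ring A] [Algebra ℂ A] {q : ℂ}
    (hq : q ≠ 0) (hroot : ∀ n : ℕ, 0 < n → q ^ n ≠ 1) (R : SqbRep A q) :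
    (R.X + (q⁻¹ - q) • (R.Y * R.E)) * R.X = R.X * (R.X + (q⁻¹ - q) • (R.Y * R.E)) ∧
    (R.X + (q⁻¹ - q) • (R.Y * R.E)) * R.Y = q⁻¹ • (R.Y * (R.X + (q⁻¹ - q) • (R.Y * R.E))) ∧
    (R.X + (q⁻¹ - q) • (R.Y * R.E)) * R.K = q⁻¹ • (R.K * (R.X + (q⁻¹ - q) • (R.Y * R.E))) := by
  obtain ⟨E, F, K, K', X, Y, hKK', hK'K, hKE, hKF, hEF, hKX, hKY, hYX, hEX, hEY, hFX, hFY⟩ := R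
  simp only at *
  have hq2 : q ^ 2 ≠ 0 := pow_ne_zero 2 hq
  have hXY : X * Y = q • (Y * X) := hYX.symm
  have hEK : E * K = (q ^ 2)⁻¹ • (K * E) := by
    rw [hKE, smul_smul, inv_mul_cancel₀ hq2, one_smul]
  have hXK : X * K = q⁻¹ • (K * X) := by
    rw [hKX, smul_smul, inv_mul_cancel₀ hq, one_smul]
  have hYK : Y * K = q • (K * Y) := by
    rw [hKY, smul_smul, mul_inv_cancel₀ hq, one_smul]
  refine ⟨?_, ?_, ?_⟩
  · rw [add_mul, mul_add, smul_mul_assoc, mul_smul_comm, mul_assoc Y E X, hEX,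
      ← mul_assoc X Y E, hXY, mul_smul_comm, smul_mul_assoc, mul_assoc]
  · rw [add_mul, mul_add, smul_mul_assoc, mul_assoc Y E Y, hEY, hXY]
    simp only [mul_add, mul_smul_comm, smul_add, smul_smul, ← mul_assoc]
    match_scalars <;> field_simp <;> ring
  · rw [add_mul, mul_add, smul_mul_assoc, mul_assoc Y E K, hEK, hXK, mul_smul_comm,
      ← mul_assoc Y K E, hYK]
    simp only [mul_add, mul_smul_comm, smul_add, smul_smul, smul_mul_assoc, ← mul_assoc]
    match_scalars <;> field_simp <;> ring
end

section
/- In the centerless quantum Schrödinger algebra, with F̃ := YK⁻¹ + (1-q⁻²)XF, one has F̃X = XF̃, F̃Y = qYF̃, and F̃K = qKF̃. -/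
theorem stmt2 {A : Type*} [Ring A] [Algebra ℂ A] {q : ℂ}
    (hq : q ≠ 0) (hroot : ∀ n : ℕ, 0 < n → q ^ n ≠ 1) (R : SqbRep A q) :
    (R.Y * R.K' + (1 - (q ^ 2)⁻¹) • (R.X * R.F)) * R.X
      = R.X * (R.Y * R.K' + (1 - (q ^ 2)⁻¹) • (R.X * R.F)) ∧
    (R.Y * R.K' + (1 - (q ^ 2)⁻¹) • (R.X * R.F)) * R.Y
      = q • (R.Y * (R.Y * R.K' + (1 - (q ^ 2)⁻¹) • (R.X * R.F))) ∧
    (R.Y * R.K' + (1 - (q ^ 2)⁻¹) • (R.X * R.F)) * R.K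
      = q • (R.K * (R.Y * R.K' + (1 - (q ^ 2)⁻¹) • (R.X * R.F))) := by
  obtain ⟨E, F, K, K', X, Y, hKK', hK'K, hKE, hKF, hEF, hKX, hKY, hYX, hEX, hEY, hFX, hFY⟩ := R
  simp only
  set s : ℂ := 1 - (q ^ 2)⁻¹ with hs
  -- K'X = q⁻¹ • (X K')
  have hXK' : X * K' = q • (K' * X) := by
    have h : K' * (K * X) * K' = K' * (q • (X * K)) * K' := by rw [hKX]
    calc X * K' = K' * (K * X) * K' := by
          rw [← mul_assoc, hK'K, one_mul]
      _ = K' * (q • (X * K)) * K' := h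
      _ = q • (K' * X * (K * K')) := by
          rw [mul_smul_comm, smul_mul_assoc, mul_assoc, mul_assoc, mul_assoc]
      _ = q • (K' * X) := by rw [hKK', mul_one]
  have hK'X : K' * X = q⁻¹ • (X * K') := by
    rw [hXK', smul_smul, inv_mul_cancel₀ hq, one_smul]
  -- K'Y = q • (Y K')
  have hYK' : Y * K' = q⁻¹ • (K' * Y) := by
    have h : K' * (K * Y) * K' = K' * (q⁻¹ • (Y * K)) * K' := by rw [hKY]
    calc Y * K' = K' * (K * Y) * K' := by
          rw [← mul_assoc, hK'K, one_mul]
      _ = K' * (q⁻¹ • (Y * K)) * K' := h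
      _ = q⁻¹ • (K' * Y * (K * K')) := by
          rw [mul_smul_comm, smul_mul_assoc, mul_assoc, mul_assoc, mul_assoc]
      _ = q⁻¹ • (K' * Y) := by rw [hKK', mul_one]
  have hK'Y : K' * Y = q • (Y * K') := by
    rw [hYK', smul_smul, mul_inv_cancel₀ hq, one_smul]
  have hFK : F * K = (q ^ 2) • (K * F) := by
    rw [hKF, smul_smul, mul_inv_cancel₀ (pow_ne_zero 2 hq), one_smul]
  have hXK : X * K = q⁻¹ • (K * X) := by
    rw [hKX, smul_smul, inv_mul_cancel₀ hq, one_smul]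
  refine ⟨?_, ?_, ?_⟩
  · -- F̃ X = X F̃
    have l1 : (Y * K' + s • (X * F)) * X
        = (q⁻¹ + s * q) • (Y * X * K') + s • (X * (X * F)) := by
      rw [add_mul, smul_mul_assoc, mul_assoc X F X, hFX, mul_add,
        mul_assoc Y K' X, hK'X, mul_smul_comm, ← mul_assoc Y X K',
        ← mul_assoc X X F, ← mul_assoc X Y K', ← hYX, smul_mul_assoc,
        smul_add, smul_smul, add_smul, add_comm ((s*q) • _)]
      module
    have l2 : X * (Y * K' + s • (X * F)) = q • (Y * X * K') + s • (X * (X * F)) := by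
      rw [mul_add, mul_smul_comm, ← mul_assoc X Y K', ← hYX, smul_mul_assoc]
    rw [l1, l2]
    congr 2
    rw [hs]
    field_simp
    ring
  · -- F̃ Y = q Y F̃
    rw [add_mul, smul_mul_assoc, mul_assoc Y K' Y, hK'Y, mul_smul_comm,
      mul_assoc X F Y, hFY, ← mul_assoc X Y F, ← hYX, smul_mul_assoc,
      smul_smul, mul_add, mul_smul_comm, smul_add, smul_smul,
      ← mul_assoc Y Y K', ← mul_assoc Y X F, mul_assoc Y X F, mul_comm s q]
  · -- F̃ K = q K F̃
    rw [add_mul, smul_mul_assoc, mul_assoc Y K' K, hK'K, mul_one,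
      mul_assoc X F K, hFK, mul_smul_comm, ← mul_assoc X K F, hXK,
      smul_mul_assoc, smul_smul, smul_smul, mul_add, mul_smul_comm,
      smul_add, smul_smul, ← mul_assoc K Y K', hKY, smul_mul_assoc,
      smul_smul, mul_inv_cancel₀ hq, one_smul, mul_assoc Y K K', hKK', mul_one,
      ← mul_assoc K X F]
    congr 2
    rw [hs]
    field_simp
end

section
/- In the centerless quantum Schrödinger algebra, ẼF̃ = F̃Ẽ + (q⁻² - 1)XYK, where Ẽ := EY - qYE and F̃ := FX - q⁻²XF. -/
-- helper: conjugation by K' from a K-commutation relation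
lemma conjInvAux {A : Type*} [Ring A] [Algebra ℂ A] {K K' a : A} {c : ℂ}
    (hKK' : K * K' = 1) (hK'K : K' * K = 1) (hc : c ≠ 0)
    (h : K * a = c • (a * K)) : K' * a = c⁻¹ • (a * K') := by
  have h2 : a * K' = c • (K' * a) := by
    calc a * K' = K' * (K * a) * K' := by
          rw [← mul_assoc, hK'K, one_mul]
      _ = c • (K' * (a * K) * K') := by rw [h, mul_smul_comm, smul_mul_assoc]
      _ = c • (K' * a * (K * K')) := by rw [mul_assoc, mul_assoc, mul_assoc]
      _ = c • (K' * a) := by rw [hKK', mul_one]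
  have := congrArg (fun z => c⁻¹ • z) h2
  simpa [smul_smul, inv_mul_cancel₀ hc] using this.symm

set_option maxHeartbeats 1600000 in
theorem stmt4 {A : Type*} [Ring A] [Algebra ℂ A] {q : ℂ}
    (hq : q ≠ 0) (hroot : ∀ n : ℕ, 0 < n → q ^ n ≠ 1) (R : SqbRep A q) :
    (R.E * R.Y - q • (R.Y * R.E)) * (R.F * R.X - (q ^ 2)⁻¹ • (R.X * R.F))
      = (R.F * R.X - (q ^ 2)⁻¹ • (R.X * R.F)) * (R.E * R.Y - q • (R.Y * R.E))
        + ((q ^ 2)⁻¹ - 1) • (R.X * R.Y * R.K) := by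
  obtain ⟨E, F, K, K', X, Y, hKK', hK'K, hKE, hKF, hEF, hKX, hKY, hYX, hEX, hEY, hFX, hFY⟩ := R
  dsimp only
  have hq2 : q ^ 2 ≠ 0 := pow_ne_zero 2 hq
  have hq21 : q ^ 2 ≠ 1 := hroot 2 (by norm_num)
  have hr : q - q⁻¹ ≠ 0 := by
    intro h
    apply hq21
    have h1 : q = q⁻¹ := sub_eq_zero.mp h
    calc q ^ 2 = q * q := sq q
      _ = q * q⁻¹ := by rw [← h1]
      _ = 1 := mul_inv_cancel₀ hq
  -- derived commutation relations with K'
  have hK'X : K' * X = q⁻¹ • (X * K') := conjInvAux hKK' hK'K hq hKX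
  have hK'Y : K' * Y = q • (Y * K') := by
    simpa using conjInvAux hKK' hK'K (inv_ne_zero hq) hKY
  have hK'E : K' * E = (q ^ 2)⁻¹ • (E * K') := conjInvAux hKK' hK'K hq2 hKE
  have hK'F : K' * F = (q ^ 2) • (F * K') := by
    simpa using conjInvAux hKK' hK'K (inv_ne_zero hq2) hKF
  have hXY : X * Y = q • (Y * X) := hYX.symm
  have hEF' : E * F = F * E + (q - q⁻¹)⁻¹ • K - (q - q⁻¹)⁻¹ • K' := by
    have := eq_add_of_sub_eq hEF
    rw [this, smul_sub]; abel
  -- tail versions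
  have tXY : ∀ t : A, X * (Y * t) = q • (Y * (X * t)) := by
    intro t; rw [← mul_assoc, hXY]; simp [smul_mul_assoc, mul_assoc]
  have tEY : ∀ t : A, E * (Y * t) = X * t + q⁻¹ • (Y * (E * t)) := by
    intro t; rw [← mul_assoc, hEY]; simp [add_mul, smul_mul_assoc, mul_assoc]
  have tEX : ∀ t : A, E * (X * t) = q • (X * (E * t)) := by
    intro t; rw [← mul_assoc, hEX]; simp [smul_mul_assoc, mul_assoc]
  have tFY : ∀ t : A, F * (Y * t) = Y * (F * t) := by
    intro t; rw [← mul_assoc, hFY, mul_assoc]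
  have tFX : ∀ t : A, F * (X * t) = Y * (K' * t) + X * (F * t) := by
    intro t; rw [← mul_assoc, hFX]; simp [add_mul, mul_assoc]
  have tEF : ∀ t : A, E * (F * t)
      = F * (E * t) + (q - q⁻¹)⁻¹ • (K * t) - (q - q⁻¹)⁻¹ • (K' * t) := by
    intro t; rw [← mul_assoc, hEF']; simp [add_mul, sub_mul, smul_mul_assoc, mul_assoc]
  have tK'X : ∀ t : A, K' * (X * t) = q⁻¹ • (X * (K' * t)) := by
    intro t; rw [← mul_assoc, hK'X]; simp [smul_mul_assoc, mul_assoc]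
  have tK'Y : ∀ t : A, K' * (Y * t) = q • (Y * (K' * t)) := by
    intro t; rw [← mul_assoc, hK'Y]; simp [smul_mul_assoc, mul_assoc]
  have tK'E : ∀ t : A, K' * (E * t) = (q ^ 2)⁻¹ • (E * (K' * t)) := by
    intro t; rw [← mul_assoc, hK'E]; simp [smul_mul_assoc, mul_assoc]
  have tK'F : ∀ t : A, K' * (F * t) = (q ^ 2) • (F * (K' * t)) := by
    intro t; rw [← mul_assoc, hK'F]; simp [smul_mul_assoc, mul_assoc]
  simp only [sub_mul, mul_sub, smul_mul_assoc, mul_smul_comm, smul_sub, smul_add, smul_smul,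
    mul_add, add_mul, mul_assoc, tXY, tEY, tEX, tFY, tFX, tEF, tK'X, tK'Y, tK'E, tK'F,
    hXY, hEY, hEX, hFY, hFX, hEF', hK'X, hK'Y, hK'E, hK'F]
  have h1 : (-1 : ℂ) + q ^ 2 ≠ 0 := fun h => hq21 (by linear_combination h)
  have h2 : (-(q ^ 2) + q ^ 4 : ℂ) ≠ 0 := fun h => mul_ne_zero hq2 h1 (by linear_combination h)
  have e1 : ((-1:ℂ)+q^2) * ((-1:ℂ)+q^2)⁻¹ = 1 := mul_inv_cancel₀ h1
  have e2 : (-(q^2)+q^4) * ((-(q^2):ℂ)+q^4)⁻¹ = 1 := mul_inv_cancel₀ h2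
  match_scalars <;>
    first
      | ring1
      | (field_simp <;>
         first
           | ring1
           | tauto
           | (left; ring1)
           | linear_combination q ^ 5 * e1 - q ^ 3 * e2
           | linear_combination (-(q ^ 3)) * e1 + q * e2)
end

section
/- In the quantum Schrödinger algebra, for every r ≥ 1, E^{r+1}Y^r = (q^{-r}EY + q[r]_q X) E^r Y^{r-1}, and more generally E^{r+1}Y^r = (∏_{i=1}^{r}(q^{-i}EY + q[i]_q X)) E. -/
/-- A representation of the quantum Schrödinger algebra `S_q`: elements of a
`ℂ`-algebra `A` satisfying the defining relations of `S_q`. -/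
structure SqRep (A : Type*) [Ring A] [Algebra ℂ A] (q : ℂ) where
  C : A
  E : A
  F : A
  K : A
  K' : A
  X : A
  Y : A
  hKK' : K * K' = 1
  hK'K : K' * K = 1
  hKE : K * E = (q ^ 2) • (E * K)
  hKF : K * F = ((q ^ 2)⁻¹) • (F * K)
  hEF : E * F - F * E = (q - q⁻¹)⁻¹ • (K - K')
  hKX : K * X = q • (X * K)
  hKY : K * Y = q⁻¹ • (Y * K)
  hYX : q • (Y * X) - X * Y = C
  hEX : E * X = q • (X * E)
  hEY : E * Y = X + q⁻¹ • (Y * E)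
  hCE : C * E = E * C
  hCF : C * F = F * C
  hCK : C * K = K * C
  hCK' : C * K' = K' * C
  hCX : C * X = X * C
  hCY : C * Y = Y * C
  hFX : F * X = Y * K' + X * F
  hFY : F * Y = Y * F

section Aux

variable {q : ℂ}

private lemma sq_coeff1 (hq : q ≠ 0) (hne : q - q⁻¹ ≠ 0) (n : ℤ) :
    ((q ^ (n + 1) - q ^ (-(n + 1))) / (q - q⁻¹)) * q + q ^ (-(n + 1))
      = (q ^ (n + 1 + 1) - q ^ (-(n + 1 + 1))) / (q - q⁻¹) := by
  rw [div_mul_eq_mul_div, div_add' _ _ _ hne]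
  congr 1
  rw [show -(n + 1 + 1) = -(n + 1) + (-1) by ring, zpow_add_one₀ hq (n + 1),
    zpow_add₀ hq (-(n + 1)) (-1)]
  simp only [zpow_neg, zpow_one]
  ring

private lemma sq_coeff1' (hq : q ≠ 0) (hne : q - q⁻¹ ≠ 0) (n : ℤ) :
    q ^ (-(n + 1)) + q * ((q ^ (n + 1) - q ^ (-(n + 1))) / (q - q⁻¹))
      = (q ^ (n + 1 + 1) - q ^ (-(n + 1 + 1))) / (q - q⁻¹) := by
  rw [add_comm, mul_comm]
  exact sq_coeff1 hq hne n

private lemma sq_coeff2 (hq : q ≠ 0) (n : ℤ) :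
    q ^ (-(n + 1)) * q⁻¹ = q ^ (-(n + 1 + 1)) := by
  rw [show -(n + 1 + 1) = -(n + 1) + (-1) by ring, zpow_add₀ hq (-(n + 1)) (-1)]
  simp only [zpow_neg, zpow_one]

variable {A : Type*} [Ring A] [Algebra ℂ A]

private lemma sq_key (hq : q ≠ 0) (hne : q - q⁻¹ ≠ 0) (R : SqRep A q) (n : ℕ) :
    R.E ^ (n + 1) * R.Y
      = ((q ^ ((n : ℤ) + 1) - q ^ (-((n : ℤ) + 1))) / (q - q⁻¹)) • (R.X * R.E ^ n)
        + q ^ (-((n : ℤ) + 1)) • (R.Y * R.E ^ (n + 1)) := by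
  induction n with
  | zero =>
      simp only [Nat.cast_zero, zero_add, pow_one, pow_zero, mul_one, zpow_one, zpow_neg]
      rw [R.hEY, div_self hne, one_smul]
  | succ n ih =>
      have h1 : R.E ^ (n + 1 + 1) * R.Y = R.E * (R.E ^ (n + 1) * R.Y) := by
        rw [← mul_assoc, ← pow_succ']
      have e1 : R.E * (R.X * R.E ^ n) = q • (R.X * R.E ^ (n + 1)) := by
        rw [← mul_assoc, R.hEX, smul_mul_assoc, mul_assoc, ← pow_succ']
      have e2 : R.E * (R.Y * R.E ^ (n + 1))
          = R.X * R.E ^ (n + 1) + q⁻¹ • (R.Y * R.E ^ (n + 1 + 1)) := by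
        rw [← mul_assoc, R.hEY, add_mul, smul_mul_assoc, mul_assoc, ← pow_succ']
      push_cast
      rw [h1, ih, mul_add, mul_smul_comm, mul_smul_comm, e1, e2, smul_smul, smul_add,
        smul_smul, ← add_assoc, ← add_smul, sq_coeff1 hq hne (n : ℤ), sq_coeff2 hq (n : ℤ)]

private lemma sq_part1 (hq : q ≠ 0) (hne : q - q⁻¹ ≠ 0) (R : SqRep A q) (m : ℕ) :
    R.E ^ (m + 2) * R.Y ^ (m + 1)
      = (q ^ (-((m : ℤ) + 1)) • (R.E * R.Y)
          + (q * ((q ^ ((m : ℤ) + 1) - q ^ (-((m : ℤ) + 1))) / (q - q⁻¹))) • R.X) *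
        (R.E ^ (m + 1) * R.Y ^ m) := by
  have hkey := sq_key hq hne R (m + 1)
  push_cast at hkey
  rw [show m + 1 + 1 = m + 2 from rfl] at hkey
  have lhs : R.E ^ (m + 2) * R.Y ^ (m + 1)
      = (R.E ^ (m + 2) * R.Y) * R.Y ^ m := by
    rw [mul_assoc, ← pow_succ']
  have e3 : R.E * R.Y * (R.E ^ (m + 1) * R.Y ^ m)
      = R.X * (R.E ^ (m + 1) * R.Y ^ m)
        + q⁻¹ • (R.Y * (R.E ^ (m + 2) * R.Y ^ m)) := by
    rw [R.hEY, add_mul, smul_mul_assoc]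
    congr 2
    rw [mul_assoc, ← mul_assoc R.E, ← pow_succ']
  rw [lhs, hkey, add_mul, smul_mul_assoc, smul_mul_assoc, add_mul, smul_mul_assoc,
    smul_mul_assoc, e3]
  simp only [mul_assoc]
  rw [smul_add, smul_smul, ← sq_coeff1' hq hne (m : ℤ), ← sq_coeff2 hq (m : ℤ), add_smul]
  abel

private lemma sq_part2 (hq : q ≠ 0) (hne : q - q⁻¹ ≠ 0) (R : SqRep A q) (m : ℕ) :
    R.E ^ (m + 2) * R.Y ^ (m + 1)
      = ((List.range (m + 1)).reverse.map (fun k =>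
          q ^ (-((k : ℤ) + 1)) • (R.E * R.Y)
            + (q * ((q ^ ((k : ℤ) + 1) - q ^ (-((k : ℤ) + 1))) / (q - q⁻¹))) • R.X)).prod
        * R.E := by
  induction m with
  | zero =>
      have h := sq_part1 hq hne R 0
      simp only [List.range_succ, List.range_zero, List.nil_append, List.reverse_singleton,
        bind_pure_comp, List.map_eq_map, List.map_map, List.map_cons, List.map_nil,
        List.prod_cons, List.prod_nil, mul_one, Function.comp_apply]
      rw [h]
      congr 1 <;> simp
  | succ m ih =>
      have h := sq_part1 hq hne R (m + 1)
      rw [show m + 1 + 1 = m + 2 from rfl] at h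
      simp only [bind_pure_comp, List.map_eq_map, List.map_map] at ih ⊢
      rw [List.range_succ, List.reverse_append, List.reverse_singleton,
        List.singleton_append, List.map_cons, List.prod_cons, h, ih]
      simp only [Function.comp_apply]
      rw [mul_assoc]

end Aux

theorem stmt11 {A : Type*} [Ring A] [Algebra ℂ A] {q : ℂ}
    (hq : q ≠ 0) (hroot : ∀ n : ℕ, 0 < n → q ^ n ≠ 1) (R : SqRep A q) (r : ℕ) (hr : 1 ≤ r) :
    R.E ^ (r + 1) * R.Y ^ r
      = (q ^ (-(r : ℤ)) • (R.E * R.Y)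
          + (q * ((q ^ (r : ℤ) - q ^ (-(r : ℤ))) / (q - q⁻¹))) • R.X) *
        (R.E ^ r * R.Y ^ (r - 1)) ∧
    R.E ^ (r + 1) * R.Y ^ r
      = ((List.range r).reverse.map (fun k =>
          q ^ (-((k : ℤ) + 1)) • (R.E * R.Y)
            + (q * ((q ^ ((k : ℤ) + 1) - q ^ (-((k : ℤ) + 1))) / (q - q⁻¹))) • R.X)).prod
        * R.E := by
  have hne : q - q⁻¹ ≠ 0 := by
    intro h
    apply hroot 2 (by norm_num)
    have h1 : q = q⁻¹ := sub_eq_zero.mp h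
    calc q ^ 2 = q⁻¹ * q := by rw [← h1, sq]
    _ = 1 := inv_mul_cancel₀ hq
  obtain ⟨m, rfl⟩ : ∃ m, r = m + 1 := ⟨r - 1, (Nat.succ_pred_eq_of_pos hr).symm⟩
  constructor
  · have h := sq_part1 hq hne R m
    push_cast
    exact h
  · exact sq_part2 hq hne R m
end

section
/- In the quantum Schrödinger algebra, for every i ≥ 2, EY^i = q^{-i} Y^i E + [i]_q Y^{i-1} X - ((q + q² - q^{2-i} - q^{i+1})/((1-q²)(q-1))) C Y^{i-2}. -/
private lemma aux1 {q : ℂ} (hq : q ≠ 0) (m : ℤ) :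
    q ^ (-(m + 1)) = q⁻¹ * q ^ (-m) := by
  rw [neg_add, zpow_add₀ hq, zpow_neg_one, mul_comm]

private lemma aux2 {q : ℂ} (hq : q ≠ 0) (h2 : q ^ 2 - 1 ≠ 0) (m : ℤ) :
    (q ^ (m + 1) - q ^ (-(m + 1))) / (q - q⁻¹)
      = q ^ (-m) + q * ((q ^ m - q ^ (-m)) / (q - q⁻¹)) := by
  have hu : q ^ m ≠ 0 := zpow_ne_zero _ hq
  have hqq : q - q⁻¹ ≠ 0 := by
    intro h
    apply h2
    have : q * (q - q⁻¹) = q ^ 2 - 1 := by field_simp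
    rw [← this, h, mul_zero]
  have num : q ^ (m + 1) - q ^ (-(m + 1))
      = q ^ (-m) * (q - q⁻¹) + q * (q ^ m - q ^ (-m)) := by
    simp only [neg_add, zpow_add₀ hq, zpow_neg, zpow_one]
    field_simp
    ring
  rw [num, add_div, mul_div_assoc, div_self hqq, mul_one, mul_div_assoc]

private lemma aux3 {q : ℂ} (hq : q ≠ 0) (hq1 : q - 1 ≠ 0) (h2 : q ^ 2 - 1 ≠ 0) (m : ℤ) :
    (q + q ^ 2 - q ^ ((2:ℤ) - (m + 1)) - q ^ ((m + 1) + 1)) / ((1 - q ^ 2) * (q - 1))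
      = (q ^ m - q ^ (-m)) / (q - q⁻¹)
        + (q + q ^ 2 - q ^ ((2:ℤ) - m) - q ^ (m + 1)) / ((1 - q ^ 2) * (q - 1)) := by
  have hu : q ^ m ≠ 0 := zpow_ne_zero _ hq
  have h2' : (1 : ℂ) - q ^ 2 ≠ 0 := fun h => h2 (by linear_combination -h)
  have hD : ((1:ℂ) - q ^ 2) * (q - 1) ≠ 0 := mul_ne_zero h2' hq1
  have hqq : q - q⁻¹ ≠ 0 := by
    intro h
    apply h2
    have : q * (q - q⁻¹) = q ^ 2 - 1 := by field_simp
    rw [← this, h, mul_zero]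
  rw [← sub_eq_iff_eq_add, div_sub_div_same, div_eq_div_iff hD hqq]
  have e1 : (2:ℤ) - (m + 1) = -m + 1 := by ring
  have e3 : (2:ℤ) - m = -m + 1 + 1 := by ring
  rw [e1, e3]
  simp only [zpow_add₀ hq, zpow_neg, zpow_one]
  field_simp
  ring

theorem stmt12 {A : Type*} [Ring A] [Algebra ℂ A] {q : ℂ}
    (hq : q ≠ 0) (hroot : ∀ n : ℕ, 0 < n → q ^ n ≠ 1) (R : SqRep A q) (i : ℕ) (hi : 2 ≤ i) :
    R.E * R.Y ^ i
      = q ^ (-(i : ℤ)) • (R.Y ^ i * R.E)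
        + ((q ^ (i : ℤ) - q ^ (-(i : ℤ))) / (q - q⁻¹)) • (R.Y ^ (i - 1) * R.X)
        - ((q + q ^ 2 - q ^ ((2 : ℤ) - (i : ℤ)) - q ^ ((i : ℤ) + 1)) /
            ((1 - q ^ 2) * (q - 1))) • (R.C * R.Y ^ (i - 2)) := by
  have hq1 : q ≠ 1 := by simpa using hroot 1 one_pos
  have hq2 : q ^ 2 ≠ 1 := hroot 2 two_pos
  have h1 : q - 1 ≠ 0 := sub_ne_zero.mpr hq1
  have h2 : q ^ 2 - 1 ≠ 0 := sub_ne_zero.mpr hq2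
  have h2' : (1 : ℂ) - q ^ 2 ≠ 0 := fun h => h2 (by linear_combination -h)
  have h2n : (-1 + q ^ 2 : ℂ) ≠ 0 := fun h => h2 (by linear_combination h)
  have hqq : q - q⁻¹ ≠ 0 := by
    intro h
    apply h2
    have : q * (q - q⁻¹) = q ^ 2 - 1 := by field_simp
    rw [← this, h, mul_zero]
  have h4 : (-q ^ 2 + q ^ 4 : ℂ) ≠ 0 := by
    intro h
    have h' : q ^ 2 * (q ^ 2 - 1) = 0 := by linear_combination h
    rcases mul_eq_zero.mp h' with h'' | h''
    · exact pow_ne_zero 2 hq h''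
    · exact h2 h''
  have hCYn : ∀ n : ℕ, R.C * R.Y ^ n = R.Y ^ n * R.C := by
    intro n
    induction n with
    | zero => simp
    | succ n ih => rw [pow_succ, ← mul_assoc, ih, mul_assoc, R.hCY, ← mul_assoc]
  have hXY : R.X * R.Y = q • (R.Y * R.X) - R.C := by
    rw [← R.hYX]; abel
  obtain ⟨k, rfl⟩ : ∃ k, i = k + 2 := ⟨i - 2, by omega⟩
  clear hi
  induction k with
  | zero =>
    simp only [Nat.add_sub_cancel, zero_add, Nat.cast_ofNat,
      show (2:ℕ) - 1 = 1 from rfl, show (2:ℕ) - 2 = 0 from rfl, pow_one, pow_zero, mul_one]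
    rw [show q ^ (-2:ℤ) = (q ^ 2)⁻¹ by
          rw [show (-2:ℤ) = -(2:ℕ) from rfl, zpow_neg, zpow_natCast],
        show q ^ (2:ℤ) = q ^ 2 by rw [show (2:ℤ) = ((2:ℕ):ℤ) from rfl, zpow_natCast],
        show ((2:ℤ) - 2) = 0 from rfl, zpow_zero,
        show ((2:ℤ) + 1) = 3 from rfl,
        show q ^ (3:ℤ) = q ^ 3 by rw [show (3:ℤ) = ((3:ℕ):ℤ) from rfl, zpow_natCast]]
    rw [pow_two, ← mul_assoc, R.hEY, add_mul, smul_mul_assoc, mul_assoc, R.hEY,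
      mul_add, hXY, mul_smul_comm, ← mul_assoc, ← pow_two]
    match_scalars <;> (field_simp; try ring; try (field_simp; ring))
  | succ k ih =>
    have hexp : (k + 1 + 2 : ℕ) = (k + 2) + 1 := by omega
    rw [hexp, pow_succ, ← mul_assoc, ih]
    simp only [show k + 2 - 1 = k + 1 from rfl, show k + 2 - 2 = k from rfl,
      show k + 2 + 1 - 2 = k + 1 from rfl, show k + 2 + 1 - 1 = k + 2 from rfl]
    rw [sub_mul, add_mul, smul_mul_assoc, smul_mul_assoc, smul_mul_assoc,
      mul_assoc (R.Y ^ (k + 2)), R.hEY, mul_assoc (R.Y ^ (k + 1)), hXY,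
      mul_assoc R.C, ← pow_succ]
    rw [mul_add, mul_smul_comm, ← mul_assoc, ← pow_succ, mul_sub, mul_smul_comm,
      ← mul_assoc, ← pow_succ, ← hCYn]
    have hc : ((k + 2 + 1 : ℕ) : ℤ) = ((k + 2 : ℕ) : ℤ) + 1 := by push_cast; ring
    rw [hc, aux2 hq h2, aux3 hq h1 h2, aux1 hq]
    module
end

section
/- Let V be a simple module over the quantum Schrödinger algebra S_q on which C acts by a nonzero scalar z. If there exists a nonzero v ∈ V with Yv = 0, then X acts injectively on the span of {X^m v : m ≥ 0}; in particular, from Y v = 0, X^m v ≠ 0 and X^{m+1} v = 0 one derives a contradiction via 0 = q^{m+1} Y X^{m+1} v = z ((q^{m+1}-1)/(q-1)) X^m v. -/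
theorem stmt13 {V : Type*} [AddCommGroup V] [Module ℂ V] {q z : ℂ}
    (hq : q ≠ 0) (hroot : ∀ n : ℕ, 0 < n → q ^ n ≠ 1)
    (R : SqRep (Module.End ℂ V) q)
    (hsimple : ∀ W : Submodule ℂ V,
      (∀ w ∈ W, R.C w ∈ W ∧ R.E w ∈ W ∧ R.F w ∈ W ∧ R.K w ∈ W ∧ R.K' w ∈ W ∧
        R.X w ∈ W ∧ R.Y w ∈ W) → W = ⊥ ∨ W = ⊤)
    (hz : z ≠ 0) (hCz : R.C = z • (1 : Module.End ℂ V))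
    (v : V) (hv : v ≠ 0) (hYv : R.Y v = 0) :
    Set.InjOn R.X (Submodule.span ℂ (Set.range fun m : ℕ => (R.X ^ m) v) : Set V) ∧
    ∀ m : ℕ, (R.X ^ m) v ≠ 0 → (R.X ^ (m + 1)) v = 0 → False := by
  have hq1 : q - 1 ≠ 0 := by
    intro h
    exact hroot 1 one_pos (by rw [pow_one]; exact sub_eq_zero.mp h)
  have hq1' : q ≠ 1 := fun h => hq1 (by rw [h]; ring)
  -- the pointwise commutation relation
  have hcomm : ∀ w : V, R.Y (R.X w) = q⁻¹ • (R.X (R.Y w) + z • w) := by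
    intro w
    have h := congrArg (fun T : Module.End ℂ V => T w) R.hYX
    simp only [hCz, LinearMap.sub_apply, LinearMap.smul_apply, Module.End.mul_apply,
      Module.End.one_apply] at h
    have h2 : q • R.Y (R.X w) = z • w + R.X (R.Y w) := sub_eq_iff_eq_add.mp h
    rw [eq_inv_smul_iff₀ hq, h2, add_comm]
  -- the scalar sequence
  set a : ℕ → ℂ := fun m => z * (1 - (q ^ m)⁻¹) / (q - 1) with ha
  have hqpow : ∀ m : ℕ, (q : ℂ) ^ m ≠ 0 := fun m => pow_ne_zero m hq
  have ha_ne : ∀ m : ℕ, a (m + 1) ≠ 0 := by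
    intro m
    have h1 : (q ^ (m + 1))⁻¹ ≠ 1 := by
      intro h
      exact hroot (m + 1) (Nat.succ_pos m) (by rw [← inv_inv (q ^ (m+1)), h, inv_one])
    have : (1 : ℂ) - (q ^ (m + 1))⁻¹ ≠ 0 := fun h => h1 (sub_eq_zero.mp h).symm
    exact div_ne_zero (mul_ne_zero hz this) hq1
  have ha_rec : ∀ m : ℕ, a (m + 1) = q⁻¹ * (a m + z) := by
    intro m
    simp only [ha]
    field_simp
    ring
  -- key recurrence : Y X^{m+1} v = a (m+1) • X^m v
  have key : ∀ m : ℕ, R.Y ((R.X ^ (m + 1)) v) = a (m + 1) • (R.X ^ m) v := by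
    intro m
    induction m with
    | zero =>
      have h1 : a 1 = q⁻¹ * z := by
        simp only [ha, pow_one]
        field_simp
      rw [pow_one, hcomm, hYv, map_zero, zero_add, smul_smul, h1, pow_zero]
      simp
    | succ n ih =>
      have hx : (R.X ^ (n + 2)) v = R.X ((R.X ^ (n + 1)) v) := by
        rw [pow_succ' R.X (n + 1)]; rfl
      rw [hx, hcomm, ih, map_smul, smul_add, smul_smul, smul_smul, ha_rec (n + 1),
        mul_add, add_smul]
      congr 1
      rw [pow_succ' R.X n]
      rfl
  -- linear independence
  have indep : ∀ n : ℕ, ∀ c : ℕ → ℂ,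
      (∑ m ∈ Finset.range n, c m • (R.X ^ m) v) = 0 → ∀ m < n, c m = 0 := by
    intro n
    induction n with
    | zero => intro c _ m hm; omega
    | succ n ih =>
      intro c hc m hm
      -- apply Y to the relation
      have hY : (∑ m ∈ Finset.range n, (c (m + 1) * a (m + 1)) • (R.X ^ m) v) = 0 := by
        have := congrArg R.Y hc
        rw [map_sum, map_zero] at this
        rw [Finset.sum_range_succ'] at this
        simp only [map_smul, key, pow_zero, Module.End.one_apply, hYv, smul_zero, add_zero,
          smul_smul] at this
        exact this
      have hsucc : ∀ k < n, c (k + 1) = 0 := by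
        intro k hk
        have := ih (fun m => c (m + 1) * a (m + 1)) hY k hk
        exact (mul_eq_zero.mp this).resolve_right (ha_ne k)
      have hc0 : c 0 = 0 := by
        rw [Finset.sum_range_succ'] at hc
        have : ∀ k ∈ Finset.range n, c (k + 1) • (R.X ^ (k + 1)) v = 0 := by
          intro k hk
          rw [hsucc k (Finset.mem_range.mp hk), zero_smul]
        rw [Finset.sum_congr rfl this, Finset.sum_const_zero, zero_add, pow_zero,
          Module.End.one_apply] at hc
        exact (smul_eq_zero.mp hc).resolve_right hv
      rcases Nat.eq_zero_or_eq_succ_pred m with h | h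
      · rw [h]; exact hc0
      · rw [h]; exact hsucc _ (by omega)
  have hLI : LinearIndependent ℂ (fun m : ℕ => (R.X ^ m) v) := by
    rw [linearIndependent_iff']
    intro s g hg i hi
    obtain ⟨n, hn⟩ := s.exists_nat_subset_range
    set g' : ℕ → ℂ := fun m => if m ∈ s then g m else 0 with hg'
    have hsum : (∑ m ∈ Finset.range n, g' m • (R.X ^ m) v) = 0 := by
      rw [← Finset.sum_subset hn (fun x _ hx => by simp [hg', hx])]
      rw [← hg]
      exact Finset.sum_congr rfl fun x hx => by simp [hg', hx]
    have := indep n g' hsum i (Finset.mem_range.mp (hn hi))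
    simpa [hg', hi] using this
  constructor
  · -- injectivity on the span
    intro w hw w' hw' hww'
    have hmem : w - w' ∈ Submodule.span ℂ (Set.range fun m : ℕ => (R.X ^ m) v) :=
      Submodule.sub_mem _ hw hw'
    have hXzero : R.X (w - w') = 0 := by rw [map_sub, hww', sub_self]
    have : w - w' = 0 := by
      rw [Finsupp.mem_span_range_iff_exists_finsupp] at hmem
      obtain ⟨c, hc⟩ := hmem
      -- apply X
      have hXc : (c.sum fun i t => t • (R.X ^ (i + 1)) v) = 0 := by
        rw [← hXzero, ← hc, map_finsuppSum]
        refine Finsupp.sum_congr fun i _ => ?_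
        rw [map_smul, pow_succ' R.X i]
        rfl
      have hLI' : LinearIndependent ℂ (fun m : ℕ => (R.X ^ (m + 1)) v) :=
        hLI.comp (· + 1) (add_left_injective 1)
      have hc0 : c = 0 := by
        apply linearIndependent_iff.mp hLI'
        rw [Finsupp.linearCombination_apply]
        exact hXc
      rw [← hc, hc0]
      simp
    exact sub_eq_zero.mp this
  · -- the contradiction for part 2
    intro m hXm hXm1
    have := key m
    rw [hXm1, map_zero] at this
    exact hXm ((smul_eq_zero.mp this.symm).resolve_left (ha_ne m))
end
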